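/- Let ρ^{AQ} be a separable density operator on H_A ⊗ H_Q, let {E_i^A}_{i=1}^M be a POVM on A with Tr[E_i^A ρ^A] = 1/M for each i, and {E_i^Q} positive operators on Q with Σᵢ E_i^Q ≤ I. Then for any real γ, Σ_{i=1}^M Tr[(E_i^A ⊗ E_i^Q) ρ^{AQ}] ≤ Tr[{Π(γ) ≥ 0}Π(γ)] + e^{γ}/M · Σᵢ Tr[E_i^Q ρ^Q] ≤ Tr[{Π(γ) ≥ 0}Π(γ)] + e^{γ}/M, where Π(γ) = ρ^{AQ} − e^{γ} ρ^A ⊗ ρ^Q and ρ^A, ρ^Q are the marginals. -/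

import Mathlib

open Matrix Kronecker BigOperators
open scoped ComplexOrder

/-- Projection onto the nonnegative eigenspace of a Hermitian matrix
(junk value `0` if the matrix is not Hermitian). -/
noncomputable def posProj {n : Type*} [Fintype n] [DecidableEq n]
    (X : Matrix n n ℂ) : Matrix n n ℂ :=
  if hX : X.IsHermitian then
    (hX.eigenvectorUnitary : Matrix n n ℂ) *
      Matrix.diagonal (fun i => if (0:ℝ) ≤ hX.eigenvalues i then (1:ℂ) else 0) *
      star (hX.eigenvectorUnitary : Matrix n n ℂ)
  else 0

/-- Functional calculus logarithm of a Hermitian matrix, with the convention `log 0 = 0`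
(junk value `0` if the matrix is not Hermitian). -/
noncomputable def matLog {n : Type*} [Fintype n] [DecidableEq n]
    (M : Matrix n n ℂ) : Matrix n n ℂ :=
  if hM : M.IsHermitian then
    (hM.eigenvectorUnitary : Matrix n n ℂ) *
      Matrix.diagonal (fun i => (Real.log (hM.eigenvalues i) : ℂ)) *
      star (hM.eigenvectorUnitary : Matrix n n ℂ)
  else 0

/-- von Neumann entropy `-Tr[M log M] = -∑ λᵢ log λᵢ` (convention `0 log 0 = 0`). -/
noncomputable def vNEntropy {n : Type*} [Fintype n] [DecidableEq n]
    (M : Matrix n n ℂ) : ℝ :=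
  if hM : M.IsHermitian then -∑ i, hM.eigenvalues i * Real.log (hM.eigenvalues i) else 0

/-- A density operator: positive semidefinite with unit trace. -/
def IsDensityOp {n : Type*} [Fintype n] [DecidableEq n] (ρ : Matrix n n ℂ) : Prop :=
  ρ.PosSemidef ∧ ρ.trace = 1

/-- Partial trace over the first tensor factor. -/
noncomputable def traceA {a b : ℕ} (M : Matrix (Fin a × Fin b) (Fin a × Fin b) ℂ) :
    Matrix (Fin b) (Fin b) ℂ :=
  Matrix.of fun j j' => ∑ i, M (i, j) (i, j')

/-- Partial trace over the second tensor factor. -/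
noncomputable def traceB {a b : ℕ} (M : Matrix (Fin a × Fin b) (Fin a × Fin b) ℂ) :
    Matrix (Fin a) (Fin a) ℂ :=
  Matrix.of fun i i' => ∑ j, M (i, j) (i', j)

/-- `n`-fold tensor (Kronecker) power of a matrix. -/
noncomputable def tensorPow {d : ℕ} (ϑ : Matrix (Fin d) (Fin d) ℂ) (n : ℕ) :
    Matrix (Fin n → Fin d) (Fin n → Fin d) ℂ :=
  Matrix.of fun f g => ∏ i, ϑ (f i) (g i)

/-! Writing `ρ^{AQ} = Π(γ) + e^γ ρ^A ⊗ ρ^Q`, each term `Tr[(E_i^A ⊗ E_i^Q) ρ^{AQ}]` splits into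
`Tr[(E_i^A ⊗ E_i^Q) Π(γ)]` plus `e^γ Tr[E_i^A ρ^A] Tr[E_i^Q ρ^Q] = e^γ/M · Tr[E_i^Q ρ^Q]`.
Since `0 ≤ P = Σᵢ E_i^A ⊗ E_i^Q ≤ I`, the diagonal of `P` in an eigenbasis of `Π(γ)` lies in
`[0, 1]`, so `Tr[P Π(γ)]` is at most the sum of the nonnegative eigenvalues,
`Tr[{Π(γ) ≥ 0} Π(γ)]`. Finally `Σᵢ Tr[E_i^Q ρ^Q] ≤ Tr ρ^Q = 1`. -/

namespace Matrix

section Kronecker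
variable {α l m n p ι : Type*}

lemma kronecker_sub [NonUnitalNonAssocRing α] (A : Matrix l m α) (B C : Matrix n p α) :
    A ⊗ₖ (B - C) = A ⊗ₖ B - A ⊗ₖ C := by
  ext; simp [mul_sub]

lemma sub_kronecker [NonUnitalNonAssocRing α] (A B : Matrix l m α) (C : Matrix n p α) :
    (A - B) ⊗ₖ C = A ⊗ₖ C - B ⊗ₖ C := by
  ext; simp [sub_mul]

lemma sum_kronecker [NonUnitalNonAssocSemiring α] (s : Finset ι) (A : ι → Matrix l m α)
    (B : Matrix n p α) : (∑ i ∈ s, A i) ⊗ₖ B = ∑ i ∈ s, A i ⊗ₖ B := by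
  ext; simp [Matrix.sum_apply, Finset.sum_mul]

lemma IsHermitian.kronecker [CommRing α] [StarRing α] {A : Matrix n n α} {B : Matrix m m α}
    (hA : A.IsHermitian) (hB : B.IsHermitian) : (A ⊗ₖ B).IsHermitian := by
  rw [IsHermitian, conjTranspose_kronecker, hA.eq, hB.eq]

end Kronecker

section PosSemidef
variable {𝕜 n m ι : Type*} [RCLike 𝕜]

open scoped MatrixOrder in
lemma PosSemidef.trace_mul_nonneg [Fintype n] {A B : Matrix n n 𝕜} (hA : A.PosSemidef)
    (hB : B.PosSemidef) : 0 ≤ (A * B).trace := by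
  classical
  obtain ⟨C, rfl⟩ := CStarAlgebra.nonneg_iff_eq_star_mul_self.mp hA.nonneg
  rw [star_eq_conjTranspose, Matrix.mul_assoc, trace_mul_comm]
  exact (hB.mul_mul_conjTranspose_same C).trace_nonneg

open scoped MatrixOrder in
lemma posSemidef_one_sub_of_one_sub_sum [Fintype ι] [Fintype n] [DecidableEq n]
    {E : ι → Matrix n n 𝕜}
    (hE : ∀ i, (E i).PosSemidef) (hsum : (1 - ∑ i, E i).PosSemidef) (i : ι) :
    (1 - E i).PosSemidef :=
  (Finset.single_le_sum (fun j _ => (hE j).nonneg) (Finset.mem_univ i)).trans hsum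

lemma posSemidef_one_sub_sum_kronecker [Fintype ι] [Fintype n] [Fintype m] [DecidableEq n]
    [DecidableEq m]
    {E : ι → Matrix n n 𝕜} {F : ι → Matrix m m 𝕜}
    (hE : ∀ i, (E i).PosSemidef) (hEsum : (1 - ∑ i, E i).PosSemidef)
    (hF : ∀ i, (F i).PosSemidef) (hFsum : (1 - ∑ i, F i).PosSemidef) :
    (1 - ∑ i, E i ⊗ₖ F i).PosSemidef := by
  have hdecomp : 1 - ∑ i, E i ⊗ₖ F i = (1 - ∑ i, E i) ⊗ₖ 1 + ∑ i, E i ⊗ₖ (1 - F i) := by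
    simp only [kronecker_sub, sub_kronecker, sum_kronecker, one_kronecker_one,
      Finset.sum_sub_distrib]
    abel
  rw [hdecomp]
  exact (hEsum.kronecker .one).add <| posSemidef_sum _ fun i _ =>
    (hE i).kronecker (posSemidef_one_sub_of_one_sub_sum hF hFsum i)

end PosSemidef

namespace IsHermitian
variable {n : Type*} [Fintype n] [DecidableEq n] {A : Matrix n n ℂ} (hA : A.IsHermitian)
include hA

lemma re_trace_mul_eq_sum_eigenvalues (X : Matrix n n ℂ) :
    ((X * A).trace).re = ∑ i, ((star (hA.eigenvectorUnitary : Matrix n n ℂ) * X *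
      (hA.eigenvectorUnitary : Matrix n n ℂ)) i i).re * hA.eigenvalues i := by
  set U : Matrix n n ℂ := (hA.eigenvectorUnitary : Matrix n n ℂ)
  have hcycle : (X * (U * diagonal (RCLike.ofReal ∘ hA.eigenvalues) * star U)).trace =
      (star U * X * U * diagonal (RCLike.ofReal ∘ hA.eigenvalues)).trace := by
    simp only [← Matrix.mul_assoc]
    rw [trace_mul_comm]
    simp only [Matrix.mul_assoc]
  conv_lhs => rw [hA.spectral_theorem, Unitary.conjStarAlgAut_apply, hcycle]
  simp [trace, Complex.re_sum]

lemma star_eigenvectorUnitary_mul_posProj_mul :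
    star (hA.eigenvectorUnitary : Matrix n n ℂ) * posProj A *
        (hA.eigenvectorUnitary : Matrix n n ℂ) =
      diagonal fun i => if 0 ≤ hA.eigenvalues i then 1 else 0 := by
  rw [posProj, dif_pos hA, ← Matrix.mul_assoc, ← Matrix.mul_assoc, Unitary.coe_star_mul_self,
    Matrix.one_mul, Matrix.mul_assoc, Unitary.coe_star_mul_self, Matrix.mul_one]

lemma re_trace_mul_le_re_trace_posProj_mul {P : Matrix n n ℂ} (hP : P.PosSemidef)
    (hP1 : (1 - P).PosSemidef) : ((P * A).trace).re ≤ ((posProj A * A).trace).re := by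
  set U : Matrix n n ℂ := (hA.eigenvectorUnitary : Matrix n n ℂ)
  rw [hA.re_trace_mul_eq_sum_eigenvalues, hA.re_trace_mul_eq_sum_eigenvalues,
    hA.star_eigenvectorUnitary_mul_posProj_mul]
  refine Finset.sum_le_sum fun i _ => ?_
  have h0 : 0 ≤ (star U * P * U) i i := (hP.conjTranspose_mul_mul_same U).diag_nonneg
  have h1 : 0 ≤ (star U * (1 - P) * U) i i := (hP1.conjTranspose_mul_mul_same U).diag_nonneg
  rw [Matrix.mul_sub, Matrix.sub_mul, Matrix.mul_one, Unitary.coe_star_mul_self] at h1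
  have h0' := (Complex.nonneg_iff.mp h0).1
  have h1' := (Complex.nonneg_iff.mp h1).1
  simp only [sub_apply, one_apply_eq, Complex.sub_re, Complex.one_re] at h1'
  rw [diagonal_apply_eq]
  split_ifs with hpos
  · simp only [Complex.one_re, one_mul]; nlinarith
  · simp only [Complex.zero_re, zero_mul]; nlinarith

end IsHermitian
end Matrix

lemma Matrix.IsHermitian.traceA {a b : ℕ} {M : Matrix (Fin a × Fin b) (Fin a × Fin b) ℂ}
    (hM : M.IsHermitian) : (traceA M).IsHermitian := by
  ext j j'
  simp only [conjTranspose_apply, _root_.traceA, of_apply, star_sum]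
  exact Finset.sum_congr rfl fun i _ => congrFun (congrFun hM.eq (i, j)) (i, j')

lemma Matrix.IsHermitian.traceB {a b : ℕ} {M : Matrix (Fin a × Fin b) (Fin a × Fin b) ℂ}
    (hM : M.IsHermitian) : (traceB M).IsHermitian := by
  ext i i'
  simp only [conjTranspose_apply, _root_.traceB, of_apply, star_sum]
  exact Finset.sum_congr rfl fun j _ => congrFun (congrFun hM.eq (i, j)) (i', j)

lemma trace_mul_traceA {a b : ℕ} (X : Matrix (Fin b) (Fin b) ℂ)
    (M : Matrix (Fin a × Fin b) (Fin a × Fin b) ℂ) :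
    (X * traceA M).trace = ((1 ⊗ₖ X) * M).trace := by
  simp only [trace, traceA, diag_apply, mul_apply, of_apply, Finset.mul_sum, kroneckerMap_apply,
    one_apply, ite_mul, one_mul, zero_mul, Fintype.sum_prod_type, Finset.sum_ite_irrel,
    Finset.sum_const_zero, Finset.sum_ite_eq, Finset.mem_univ, ↓reduceIte]
  exact (Finset.sum_comm.trans (Finset.sum_congr rfl fun _ _ => Finset.sum_comm)).symm

lemma IsDensityOp.re_trace_mul_le_one {n : Type*} [Fintype n] [DecidableEq n]
    {ρ E : Matrix n n ℂ} (hρ : IsDensityOp ρ) (hE : (1 - E).PosSemidef) :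
    ((E * ρ).trace).re ≤ 1 := by
  have h := Complex.nonneg_iff.mp (hE.trace_mul_nonneg hρ.1) |>.1
  rw [Matrix.sub_mul, Matrix.one_mul, trace_sub, hρ.2, Complex.sub_re, Complex.one_re] at h
  linarith

lemma re_trace_kronecker_mul_kronecker {n m : Type*} [Fintype n] [Fintype m]
    (E ρ : Matrix n n ℂ) {F σ : Matrix m m ℂ} (h : ((F * σ).trace).im = 0) :
    (((E ⊗ₖ F) * (ρ ⊗ₖ σ)).trace).re = ((E * ρ).trace).re * ((F * σ).trace).re := by
  rw [← mul_kronecker_mul, trace_kronecker, Complex.mul_re, h, mul_zero, sub_zero]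

theorem classical_capacity_converse_bound_general {a q : ℕ}
    (ρAQ : Matrix (Fin a × Fin q) (Fin a × Fin q) ℂ) (hρ : IsDensityOp ρAQ)
    (ρA : Matrix (Fin a) (Fin a) ℂ) (hρA : ρA = traceB ρAQ)
    (ρQ : Matrix (Fin q) (Fin q) ℂ) (hρQ : ρQ = traceA ρAQ)
    (M : ℕ)
    (EA : Fin M → Matrix (Fin a) (Fin a) ℂ) (hEA : ∀ i, (EA i).PosSemidef)
    (hEAsum : ((1 : Matrix (Fin a) (Fin a) ℂ) - ∑ i, EA i).PosSemidef)
    (hEAunif : ∀ i, ((EA i * ρA).trace).re = 1 / M)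
    (EQ : Fin M → Matrix (Fin q) (Fin q) ℂ) (hEQ : ∀ i, (EQ i).PosSemidef)
    (hEQsum : ((1 : Matrix (Fin q) (Fin q) ℂ) - ∑ i, EQ i).PosSemidef)
    (γ : ℝ) :
    (∑ i, (((EA i ⊗ₖ EQ i) * ρAQ).trace).re
        ≤ ((posProj (ρAQ - (Real.exp γ : ℂ) • (ρA ⊗ₖ ρQ))
              * (ρAQ - (Real.exp γ : ℂ) • (ρA ⊗ₖ ρQ))).trace).re
          + Real.exp γ / M * ∑ i, ((EQ i * ρQ).trace).re)
    ∧ ((posProj (ρAQ - (Real.exp γ : ℂ) • (ρA ⊗ₖ ρQ))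
          * (ρAQ - (Real.exp γ : ℂ) • (ρA ⊗ₖ ρQ))).trace).re
        + Real.exp γ / M * ∑ i, ((EQ i * ρQ).trace).re
      ≤ ((posProj (ρAQ - (Real.exp γ : ℂ) • (ρA ⊗ₖ ρQ))
            * (ρAQ - (Real.exp γ : ℂ) • (ρA ⊗ₖ ρQ))).trace).re
        + Real.exp γ / M := by
  set Λ := ρAQ - (Real.exp γ : ℂ) • (ρA ⊗ₖ ρQ)
  have hΛ : Λ.IsHermitian := hρ.1.isHermitian.sub <|
    ((hρA ▸ hρ.1.isHermitian.traceB).kronecker (hρQ ▸ hρ.1.isHermitian.traceA)).smul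
      (Complex.conj_ofReal _)
  have hEQρQ : ∀ i, ((EQ i * ρQ).trace).im = 0 := fun i => by
    rw [hρQ, trace_mul_traceA]
    exact (Complex.nonneg_iff.mp
      ((PosSemidef.one.kronecker (hEQ i)).trace_mul_nonneg hρ.1)).2.symm
  have hsplit : ∀ i, (((EA i ⊗ₖ EQ i) * ρAQ).trace).re =
      (((EA i ⊗ₖ EQ i) * Λ).trace).re + Real.exp γ / M * ((EQ i * ρQ).trace).re := fun i => by
    rw [show ρAQ = Λ + (Real.exp γ : ℂ) • (ρA ⊗ₖ ρQ) from (sub_add_cancel _ _).symm,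
      Matrix.mul_add, trace_add, Complex.add_re, Matrix.mul_smul, trace_smul, smul_eq_mul,
      Complex.re_ofReal_mul, re_trace_kronecker_mul_kronecker _ _ (hEQρQ i), hEAunif i]
    ring
  have hEQρQ_sum : ∑ i, ((EQ i * ρQ).trace).re ≤ 1 := by
    rw [← Complex.re_sum, ← trace_sum, ← Finset.sum_mul, hρQ, trace_mul_traceA]
    refine hρ.re_trace_mul_le_one ?_
    rw [← one_kronecker_one, ← kronecker_sub]
    exact PosSemidef.one.kronecker hEQsum
  refine ⟨?_, add_le_add_right (mul_le_of_le_one_right (by positivity) hEQρQ_sum) _⟩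
  calc ∑ i, (((EA i ⊗ₖ EQ i) * ρAQ).trace).re
      = (((∑ i, EA i ⊗ₖ EQ i) * Λ).trace).re
          + Real.exp γ / M * ∑ i, ((EQ i * ρQ).trace).re := by
        rw [Finset.sum_congr rfl fun i _ => hsplit i, Finset.sum_add_distrib, ← Finset.mul_sum,
          Finset.sum_mul, trace_sum, Complex.re_sum]
    _ ≤ _ := add_le_add_left (hΛ.re_trace_mul_le_re_trace_posProj_mul
        (posSemidef_sum _ fun i _ => (hEA i).kronecker (hEQ i))
        (posSemidef_one_sub_sum_kronecker hEA hEAsum hEQ hEQsum)) _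

theorem classical_capacity_converse_bound {a q : ℕ}
    (ρAQ : Matrix (Fin a × Fin q) (Fin a × Fin q) ℂ) (hρ : IsDensityOp ρAQ)
    (hsep : ∃ (k : ℕ) (w : Fin k → ℝ) (σA : Fin k → Matrix (Fin a) (Fin a) ℂ)
        (σQ : Fin k → Matrix (Fin q) (Fin q) ℂ),
        (∀ i, 0 ≤ w i) ∧ (∀ i, (σA i).PosSemidef) ∧ (∀ i, (σQ i).PosSemidef) ∧
        ρAQ = ∑ i, (w i : ℂ) • (σA i ⊗ₖ σQ i))
    (ρA : Matrix (Fin a) (Fin a) ℂ) (hρA : ρA = traceB ρAQ)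
    (ρQ : Matrix (Fin q) (Fin q) ℂ) (hρQ : ρQ = traceA ρAQ)
    (M : ℕ) (hM : 0 < M)
    (EA : Fin M → Matrix (Fin a) (Fin a) ℂ) (hEA : ∀ i, (EA i).PosSemidef)
    (hEAsum : ((1 : Matrix (Fin a) (Fin a) ℂ) - ∑ i, EA i).PosSemidef)
    (hEAunif : ∀ i, ((EA i * ρA).trace).re = 1 / M)
    (EQ : Fin M → Matrix (Fin q) (Fin q) ℂ) (hEQ : ∀ i, (EQ i).PosSemidef)
    (hEQsum : ((1 : Matrix (Fin q) (Fin q) ℂ) - ∑ i, EQ i).PosSemidef)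
    (γ : ℝ) :
    (∑ i, (((EA i ⊗ₖ EQ i) * ρAQ).trace).re
        ≤ ((posProj (ρAQ - (Real.exp γ : ℂ) • (ρA ⊗ₖ ρQ))
              * (ρAQ - (Real.exp γ : ℂ) • (ρA ⊗ₖ ρQ))).trace).re
          + Real.exp γ / M * ∑ i, ((EQ i * ρQ).trace).re)
    ∧ ((posProj (ρAQ - (Real.exp γ : ℂ) • (ρA ⊗ₖ ρQ))
          * (ρAQ - (Real.exp γ : ℂ) • (ρA ⊗ₖ ρQ))).trace).re
        + Real.exp γ / M * ∑ i, ((EQ i * ρQ).trace).re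
      ≤ ((posProj (ρAQ - (Real.exp γ : ℂ) • (ρA ⊗ₖ ρQ))
            * (ρAQ - (Real.exp γ : ℂ) • (ρA ⊗ₖ ρQ))).trace).re
        + Real.exp γ / M :=
  classical_capacity_converse_bound_general ρAQ hρ ρA hρA ρQ hρQ M EA hEA hEAsum hEAunif EQ hEQ
    hEQsum γ
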